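/- arXiv:2012.01374 — 4 statements merged into one kernel-verified Lean document; each statement's English description precedes it below -/
import Mathlib

section
/- Let G be a finite non-abelian group, H a subgroup of G with H ≠ Z(H,G), and g ∈ K(H,G) with g ≠ 1 and g² ≠ 1. Let x ∈ H \ Z(H,G). (i) If exactly one of the two statements 'x is conjugate in G to xg' and 'x is conjugate in G to xg⁻¹' holds, then the degree of x in Δ_{H,G}^g equals |G| - |Z(H,G)| - |C_G(x)| - 1. (ii) If x is conjugate in G to both xg and xg⁻¹, then the degree of x in Δ_{H,G}^g equals |G| - |Z(H,G)| - 2|C_G(x)| - 1. -/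
open SimpleGraph

/-- `Z(H,G)`: the set of elements of `H` commuting with every element of `G`. -/
def relCenter (G : Type*) [Group G] (H : Subgroup G) : Set G :=
  {x : G | x ∈ H ∧ ∀ y : G, x * y = y * x}

/-- The commutator `[x,y] = x⁻¹y⁻¹xy`. -/
def comm' {G : Type*} [Group G] (x y : G) : G :=
  x⁻¹ * y⁻¹ * x * y

lemma comm'_swap {G : Type*} [Group G] (x y : G) :
    comm' y x = (comm' x y)⁻¹ := by
  simp only [comm', mul_inv_rev, inv_inv, mul_assoc]

/-- `K(H,G) = {[x,y] : x ∈ H, y ∈ G}`. -/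
def relComm (G : Type*) [Group G] (H : Subgroup G) : Set G :=
  {w : G | ∃ x ∈ H, ∃ y : G, comm' x y = w}

/-- The graph `Δ_{H,G}^g`: vertices are the elements of `G \ Z(H,G)`, and two distinct
vertices `x`, `y` are adjacent iff (`x ∈ H` or `y ∈ H`) and `[x,y] ≠ g, g⁻¹`. -/
def gnc (G : Type*) [Group G] (H : Subgroup G) (g : G) :
    SimpleGraph (((relCenter G H)ᶜ : Set G)) where
  Adj x y := x ≠ y ∧ ((x : G) ∈ H ∨ (y : G) ∈ H) ∧
    comm' (x : G) (y : G) ≠ g ∧ comm' (x : G) (y : G) ≠ g⁻¹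
  symm := by
    constructor
    rintro x y ⟨hxy, hH, h1, h2⟩
    refine ⟨fun h => hxy h.symm, hH.symm, ?_, ?_⟩
    · rw [comm'_swap, ne_eq, inv_eq_iff_eq_inv]
      exact h2
    · rw [comm'_swap, ne_eq, inv_eq_iff_eq_inv, inv_inv]
      exact h1
  loopless := by
    constructor
    rintro x ⟨h, -⟩
    exact h rfl

/-! The neighbours of `x` are the `y ∉ Z(H,G)` with `y ≠ x` and `[x,y] ∉ {g, g⁻¹}`, and the four
excluded sets are pairwise disjoint because `g ≠ 1` and `g ≠ g⁻¹`. Since `[x,y] = w` means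
`y⁻¹xy = xw`, the solutions `y` are empty unless `x` is conjugate to `xw`, and otherwise form a
right coset of `C_G(x)`. -/

open Finset

section Commutator

variable {G : Type*} [Group G]

lemma comm'_eq_iff_conj_eq (x y w : G) : comm' x y = w ↔ y⁻¹ * x * y = x * w := by
  simp only [comm', mul_assoc, inv_mul_eq_iff_eq_mul]

lemma conj_eq_conj_iff (x y y₀ : G) :
    y⁻¹ * x * y = y₀⁻¹ * x * y₀ ↔ y * y₀⁻¹ ∈ Subgroup.centralizer {x} := by
  rw [Subgroup.mem_centralizer_singleton_iff]
  constructor <;> intro h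
  · calc y * y₀⁻¹ * x = y * (y₀⁻¹ * x * y₀) * y₀⁻¹ := by group
      _ = y * (y⁻¹ * x * y) * y₀⁻¹ := by rw [h]
      _ = x * (y * y₀⁻¹) := by group
  · calc y⁻¹ * x * y = y⁻¹ * (x * (y * y₀⁻¹)) * y₀ := by group
      _ = y⁻¹ * (y * y₀⁻¹ * x) * y₀ := by rw [h]
      _ = y₀⁻¹ * x * y₀ := by group

lemma comm'_eq_comm'_iff (x y y₀ : G) :
    comm' x y = comm' x y₀ ↔ y * y₀⁻¹ ∈ Subgroup.centralizer {x} := by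
  rw [comm'_eq_iff_conj_eq, ← conj_eq_conj_iff, comm']
  group

lemma comm'_self (x : G) : comm' x x = 1 := by
  simp [comm']

lemma comm'_eq_one_of_mem_relCenter {H : Subgroup G} (x : G) {y : G}
    (hy : y ∈ relCenter G H) : comm' x y = 1 := by
  rw [comm'_eq_iff_conj_eq, mul_one, mul_assoc, ← hy.2 x, inv_mul_cancel_left]

end Commutator

section Fiber

variable {G : Type*} [Group G] [Fintype G] [DecidableEq G]

def commFiber (x w : G) : Finset G := {y | comm' x y = w}

@[simp]
lemma mem_commFiber {x w y : G} : y ∈ commFiber x w ↔ comm' x y = w := by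
  simp [commFiber]

lemma commFiber_nonempty_iff (x w : G) :
    (commFiber x w).Nonempty ↔ ∃ z : G, z⁻¹ * x * z = x * w := by
  simp [Finset.Nonempty, comm'_eq_iff_conj_eq]

lemma card_commFiber_of_exists {x w : G} (h : ∃ z : G, z⁻¹ * x * z = x * w) :
    #(commFiber x w) = Nat.card (Subgroup.centralizer ({x} : Set G)) := by
  obtain ⟨y₀, hy₀⟩ := (commFiber_nonempty_iff x w).2 h
  obtain rfl : comm' x y₀ = w := mem_commFiber.1 hy₀
  calc #(commFiber x (comm' x y₀)) = Nat.card {y // comm' x y = comm' x y₀} := by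
        rw [Nat.card_eq_fintype_card, Fintype.card_subtype, commFiber]
    _ = Nat.card (Subgroup.centralizer ({x} : Set G)) :=
        Nat.card_congr ((Equiv.mulRight y₀⁻¹).subtypeEquiv fun y => comm'_eq_comm'_iff x y y₀)

lemma card_commFiber_of_not_exists {x w : G} (h : ¬ ∃ z : G, z⁻¹ * x * z = x * w) :
    #(commFiber x w) = 0 := by
  rw [card_eq_zero, ← not_nonempty_iff_eq_empty, commFiber_nonempty_iff]
  exact h

end Fiber

open scoped Classical in
lemma degree_gnc_eq {G : Type*} [Group G] [Fintype G] {H : Subgroup G} {g x : G}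
    (hxH : x ∈ H) (hx : x ∉ relCenter G H) (hg1 : g ≠ 1) (hgg : g ≠ g⁻¹) :
    (gnc G H g).degree ⟨x, hx⟩ = Nat.card G - Nat.card (relCenter G H) - 1
      - #(commFiber x g) - #(commFiber x g⁻¹) := by
  set S := (relCenter G H).toFinset ∪ ({x} ∪ (commFiber x g ∪ commFiber x g⁻¹))
  have hnbr : ((gnc G H g).neighborFinset ⟨x, hx⟩).map (Function.Embedding.subtype _) = Sᶜ := by
    ext y
    simp only [S, mem_map, mem_neighborFinset, mem_compl, mem_union, Set.mem_toFinset,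
      mem_singleton, mem_commFiber]
    simp only [gnc, ne_eq, Subtype.ext_iff, eq_comm (a := x), hxH, true_or, true_and,
      Function.Embedding.subtype_apply, Subtype.exists, Set.mem_compl_iff, exists_and_left,
      exists_prop, exists_eq_right_right, not_or]
    tauto
  have hcard : #S = Nat.card (relCenter G H) + (1 + (#(commFiber x g) + #(commFiber x g⁻¹))) := by
    rw [card_union_of_disjoint, card_union_of_disjoint, card_union_of_disjoint, card_singleton,
      Nat.card_eq_card_toFinset]
    · simp only [Finset.disjoint_left, mem_commFiber]
      exact fun y hg hg' => hgg (hg.symm.trans hg')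
    · simp only [Finset.disjoint_left, mem_singleton, mem_union, mem_commFiber]
      rintro y rfl
      simpa [comm'_self, eq_comm] using hg1
    · simp only [Finset.disjoint_left, Set.mem_toFinset, mem_singleton, mem_union, mem_commFiber]
      intro y hy
      simpa [comm'_eq_one_of_mem_relCenter x hy, ne_of_mem_of_not_mem hy hx, eq_comm] using hg1
  rw [← card_neighborFinset_eq_degree, ← card_map, hnbr, card_compl, hcard,
    Nat.card_eq_fintype_card (α := G)]
  omega

open scoped Classical in
theorem stmt1_general {G : Type*} [Group G] [Fintype G]
    (H : Subgroup G)
    (g : G) (hg1 : g ≠ 1) (hg2 : g ^ 2 ≠ 1)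
    (x : G) (hxH : x ∈ H) (hx : x ∉ relCenter G H) :
    ((((∃ z : G, z⁻¹ * x * z = x * g) ∧ ¬ (∃ z : G, z⁻¹ * x * z = x * g⁻¹)) ∨
      ((¬ ∃ z : G, z⁻¹ * x * z = x * g) ∧ (∃ z : G, z⁻¹ * x * z = x * g⁻¹))) →
      (gnc G H g).degree ⟨x, hx⟩
        = Nat.card G - Nat.card (relCenter G H)
            - Nat.card (Subgroup.centralizer ({x} : Set G)) - 1) ∧
    (((∃ z : G, z⁻¹ * x * z = x * g) ∧ (∃ z : G, z⁻¹ * x * z = x * g⁻¹)) →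
      (gnc G H g).degree ⟨x, hx⟩
        = Nat.card G - Nat.card (relCenter G H)
            - 2 * Nat.card (Subgroup.centralizer ({x} : Set G)) - 1) := by
  have hgg : g ≠ g⁻¹ := fun h => hg2 (by rw [pow_two]; exact eq_inv_iff_mul_eq_one.1 h)
  rw [degree_gnc_eq hxH hx hg1 hgg]
  refine ⟨?_, ?_⟩
  · rintro (⟨hg, hg'⟩ | ⟨hg, hg'⟩)
    · rw [card_commFiber_of_exists hg, card_commFiber_of_not_exists hg']
      omega
    · rw [card_commFiber_of_not_exists hg, card_commFiber_of_exists hg']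
      omega
  · rintro ⟨hg, hg'⟩
    rw [card_commFiber_of_exists hg, card_commFiber_of_exists hg']
    omega

open scoped Classical in
/-- degree of a vertex `x ∈ H \ Z(H,G)` when `g ≠ 1`, `g² ≠ 1`. -/
theorem stmt1 {G : Type*} [Group G] [Fintype G]
    (hna : ∃ x y : G, x * y ≠ y * x)
    (H : Subgroup G) (hH : (H : Set G) ≠ relCenter G H)
    (g : G) (hgK : g ∈ relComm G H) (hg1 : g ≠ 1) (hg2 : g ^ 2 ≠ 1)
    (x : G) (hxH : x ∈ H) (hx : x ∉ relCenter G H) :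
    ((((∃ z : G, z⁻¹ * x * z = x * g) ∧ ¬ (∃ z : G, z⁻¹ * x * z = x * g⁻¹)) ∨
      ((¬ ∃ z : G, z⁻¹ * x * z = x * g) ∧ (∃ z : G, z⁻¹ * x * z = x * g⁻¹))) →
      (gnc G H g).degree ⟨x, hx⟩
        = Nat.card G - Nat.card (relCenter G H)
            - Nat.card (Subgroup.centralizer ({x} : Set G)) - 1) ∧
    (((∃ z : G, z⁻¹ * x * z = x * g) ∧ (∃ z : G, z⁻¹ * x * z = x * g⁻¹)) →
      (gnc G H g).degree ⟨x, hx⟩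
        = Nat.card G - Nat.card (relCenter G H)
            - 2 * Nat.card (Subgroup.centralizer ({x} : Set G)) - 1) :=
  stmt1_general H g hg1 hg2 x hxH hx
end

section
/- Let G be a finite non-abelian group, H a subgroup of G with H ≠ Z(H,G), and g ∈ K(H,G). If |H| ∉ {2, 3, 4, 6}, then the graph Δ_{H,G}^g is not a tree. -/
open SimpleGraph

/-!
Suppose `Δ = Δ_{H,G}^g` is a tree.

For `g = 1` adjacency means non-commuting. Two non-commuting `x, y ∈ H` span the triangle
`x, y, xy`. If `H` is abelian, `|H| ≠ 2` yields distinct `a, a' ∈ H \ Z(H,G)`, and any `b`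
commuting with neither (a group is not the union of two proper centralizers) makes `b` and `ab`
two common neighbours of `a` and `a'`: a 4-cycle.

For `g ≠ 1` any two distinct commuting vertices, one of them in `H`, are adjacent. If `Z(H,G)`
contains some `u ≠ 1`, then `[au, w] = [a, w]`, so any neighbour of `a ∈ H \ Z(H,G)` other
than `au` would close a triangle with `a, au`; thus `{a, au}` is a whole component. If
`Z(H,G) = 1`, the triangle `x, x⁻¹, y` shows that the centralizer of `x ∈ H` with `x² ≠ 1` is
`{1, x, x⁻¹}`; so the elements of `H` have order at most `3`, and a subgroup of `H` of exponent
`2` has order at most `2` (three of its elements would form a commuting triangle). For `a ∈ H`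
of order `3`, every `c ∉ {1, a, a⁻¹}` has commutator `g^{±1}` with `a` or `a⁻¹`; the solutions
of `[t, c] = w` form a translate of a subset of the centralizer of `t`, so
`|G| ≤ 3 + 4·3 = 15`. As `3 ∣ |H|` and `|H| ≠ 3, 6`, this forces `H = G` with
`|G| ∈ {9, 12, 15}`, which a nontrivial centre, a Sylow `2`-subgroup of exponent `2`, or an
element of order `5` rules out.
-/

namespace SimpleGraph

variable {V : Type*} {Γ : SimpleGraph V}

lemma IsAcyclic.not_adj_of_adj_of_adj (hΓ : Γ.IsAcyclic) {a b c : V} (hab : Γ.Adj a b)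
    (hbc : Γ.Adj b c) : ¬Γ.Adj a c := by
  classical
  exact fun hac => hΓ.cliqueFree le_rfl {a, b, c} (is3Clique_triple_iff.2 ⟨hab, hac, hbc⟩)

lemma IsAcyclic.commonNeighbors_subsingleton (hΓ : Γ.IsAcyclic) {v w : V} (hvw : v ≠ w) :
    (Γ.commonNeighbors v w).Subsingleton := by
  intro x hx y hy
  rw [mem_commonNeighbors] at hx hy
  have hpx : (Walk.cons hx.1 (Walk.cons hx.2.symm Walk.nil)).IsPath := by
    simp [Walk.cons_isPath_iff, hx.1.ne, hx.2.ne', hvw]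
  have hpy : (Walk.cons hy.1 (Walk.cons hy.2.symm Walk.nil)).IsPath := by
    simp [Walk.cons_isPath_iff, hy.1.ne, hy.2.ne', hvw]
  have := (hΓ.subsingleton_path v w).elim ⟨_, hpx⟩ ⟨_, hpy⟩
  simpa using congrArg (fun p => p.1.support) this

lemma Preconnected.mem_of_adj_closed (hΓ : Γ.Preconnected) {S : Set V}
    (hS : ∀ ⦃u v⦄, Γ.Adj u v → u ∈ S → v ∈ S) {u : V} (hu : u ∈ S) (v : V) :
    v ∈ S := by
  obtain ⟨p⟩ := hΓ u v
  by_contra hv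
  obtain ⟨d, -, hd, hd'⟩ := p.exists_boundary_dart S hu hv
  exact hd' (hS d.adj hd)

end SimpleGraph

section Group

variable {G : Type*} [Group G]

lemma Commute.commute_mul_right_iff {x y z : G} (h : Commute x y) :
    Commute x (y * z) ↔ Commute x z :=
  ⟨fun h' => by simpa using h.inv_right.mul_right h', h.mul_right⟩

lemma commute_of_sq_eq_one {x y : G} (hx : x ^ 2 = 1) (hy : y ^ 2 = 1)
    (hxy : (x * y) ^ 2 = 1) : Commute x y := by
  have hinv : ∀ z : G, z ^ 2 = 1 → z⁻¹ = z :=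
    fun z hz => inv_eq_of_mul_eq_one_right (sq z ▸ hz)
  calc x * y = (x * y)⁻¹ := (hinv _ hxy).symm
    _ = y * x := by rw [mul_inv_rev, hinv x hx, hinv y hy]

lemma exists_not_commute_and_not_commute {a a' p q : G} (hp : ¬Commute a p)
    (hq : ¬Commute a' q) : ∃ b, ¬Commute a b ∧ ¬Commute a' b := by
  by_cases h₁ : Commute a' p
  · by_cases h₂ : Commute a q
    · exact ⟨p * q, fun h => hp (by simpa using h.mul_right h₂.inv_right),
        fun h => hq (h₁.commute_mul_right_iff.1 h)⟩
    · exact ⟨q, h₂, hq⟩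
  · exact ⟨p, hp, h₁⟩

lemma comm'_eq_one_iff {x y : G} : comm' x y = 1 ↔ Commute x y := by
  rw [show comm' x y = (y * x)⁻¹ * (x * y) by simp [comm', mul_assoc], inv_mul_eq_one, eq_comm]
  rfl

lemma comm'_mul_of_forall_commute {u : G} (hu : ∀ y, Commute u y) (x y : G) :
    comm' (x * u) y = comm' x y := by
  rw [← (hu x).eq, comm', comm', mul_inv_rev, mul_assoc x⁻¹, (hu y⁻¹).inv_left.eq]
  group

lemma comm'_mul_right_eq_iff {t e d : G} : comm' t (e * d) = comm' t d ↔ Commute t e := by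
  simp only [comm', mul_inv_rev, mul_assoc, mul_right_inj]
  rw [← mul_assoc t, ← mul_assoc e⁻¹, mul_left_inj, inv_mul_eq_iff_eq_mul]
  rfl

lemma ncard_setOf_comm'_eq_le {t w : G} {s : Set G} (hs : s.Finite)
    (hC : ∀ c, Commute t c → c ∈ s) : {c | comm' t c = w}.ncard ≤ s.ncard := by
  rcases Set.eq_empty_or_nonempty {c | comm' t c = w} with h | ⟨d, hd⟩
  · simp [h]
  refine Set.ncard_le_ncard_of_injOn (· * d⁻¹) (fun c hc => hC _ ?_)
    (mul_left_injective d⁻¹).injOn hs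
  rw [← comm'_mul_right_eq_iff (d := d), inv_mul_cancel_right]
  exact hc.trans hd.symm

end Group

section RelCenter

variable {G : Type*} [Group G] {H : Subgroup G}

lemma commute_of_mem_relCenter {u : G} (hu : u ∈ relCenter G H) (y : G) : Commute u y :=
  hu.2 y

lemma one_mem_relCenter : (1 : G) ∈ relCenter G H :=
  ⟨H.one_mem, fun y => (Commute.one_left y).eq⟩

lemma inv_mem_relCenter {u : G} (hu : u ∈ relCenter G H) : u⁻¹ ∈ relCenter G H :=
  ⟨H.inv_mem hu.1, fun y => (commute_of_mem_relCenter hu y).inv_left⟩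

lemma notMem_relCenter_of_not_commute {a p : G} (h : ¬Commute a p) : a ∉ relCenter G H :=
  fun ha => h (commute_of_mem_relCenter ha p)

lemma exists_mem_notMem_relCenter (hH : (H : Set G) ≠ relCenter G H) :
    ∃ a ∈ H, a ∉ relCenter G H := by
  by_contra! h
  exact hH (Set.Subset.antisymm h fun _ hx => hx.1)

lemma exists_not_commute_of_notMem_relCenter {a : G} (haH : a ∈ H)
    (ha : a ∉ relCenter G H) : ∃ p, ¬Commute a p := by
  by_contra! h
  exact ha ⟨haH, fun y => (h y).eq⟩

lemma mul_notMem_relCenter {a u : G} (haH : a ∈ H) (ha : a ∉ relCenter G H)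
    (hu : u ∈ relCenter G H) : a * u ∉ relCenter G H := by
  refine fun hau => ha ⟨haH, fun y => ?_⟩
  simpa using
    ((commute_of_mem_relCenter hau y).mul_left (commute_of_mem_relCenter hu y).inv_left).eq

lemma exists_ne_mem_notMem_relCenter {a : G} (haH : a ∈ H) (ha : a ∉ relCenter G H)
    (h2 : Nat.card H ≠ 2) : ∃ a' ∈ H, a' ∉ relCenter G H ∧ a' ≠ a := by
  have ha1 : a ≠ 1 := fun h => ha (h ▸ one_mem_relCenter)
  obtain ⟨x, hxH, hx⟩ : ∃ x ∈ H, x ∉ ({1, a} : Set G) := by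
    by_contra! hsub
    have hHa : (H : Set G) = {1, a} :=
      Set.Subset.antisymm hsub (Set.insert_subset H.one_mem (Set.singleton_subset_iff.2 haH))
    rw [← SetLike.coe_sort_coe, Nat.card_coe_set_eq, hHa, Set.ncard_pair ha1.symm] at h2
    exact h2 rfl
  simp only [Set.mem_insert_iff, Set.mem_singleton_iff, not_or] at hx
  by_cases hxZ : x ∈ relCenter G H
  · exact ⟨a * x, H.mul_mem haH hxH, mul_notMem_relCenter haH ha hxZ, by simpa using hx.1⟩
  · exact ⟨x, hxH, hxZ, hx.2⟩

lemma notMem_relCenter_iff_ne_one (hZ : relCenter G H = {1}) {x : G} :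
    x ∉ relCenter G H ↔ x ≠ 1 := by
  rw [hZ, Set.mem_singleton_iff]

end RelCenter

section Adjacency

variable {G : Type*} [Group G] {H : Subgroup G} {g : G}

lemma gnc_adj_mk {x y : G} (hx : x ∉ relCenter G H) (hy : y ∉ relCenter G H) :
    (gnc G H g).Adj ⟨x, hx⟩ ⟨y, hy⟩ ↔
      x ≠ y ∧ (x ∈ H ∨ y ∈ H) ∧ comm' x y ≠ g ∧ comm' x y ≠ g⁻¹ := by
  simp [gnc]

lemma gnc_adj_of_commute (hg : g ≠ 1) {x y : G} (hx : x ∉ relCenter G H)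
    (hy : y ∉ relCenter G H) (hxy : x ≠ y) (hH : x ∈ H ∨ y ∈ H) (hc : Commute x y) :
    (gnc G H g).Adj ⟨x, hx⟩ ⟨y, hy⟩ := by
  rw [gnc_adj_mk, comm'_eq_one_iff.2 hc]
  exact ⟨hxy, hH, hg.symm, by simpa [eq_comm] using hg⟩

lemma gnc_one_adj_of_not_commute {x y : G} (hx : x ∉ relCenter G H)
    (hy : y ∉ relCenter G H) (hH : x ∈ H ∨ y ∈ H) (hc : ¬Commute x y) :
    (gnc G H 1).Adj ⟨x, hx⟩ ⟨y, hy⟩ := by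
  have hc' : comm' x y ≠ 1 := mt comm'_eq_one_iff.1 hc
  rw [gnc_adj_mk, inv_one]
  exact ⟨by rintro rfl; exact hc (Commute.refl x), hH, hc', hc'⟩

end Adjacency

section TrivialTarget

variable {G : Type*} [Group G] {H : Subgroup G}

lemma not_isAcyclic_gnc_one_of_not_commute {x y : G} (hx : x ∈ H) (hy : y ∈ H)
    (hxy : ¬Commute x y) : ¬(gnc G H 1).IsAcyclic := by
  have hx_xy : ¬Commute (x * y) x := mt (IsLeftRegular.all x).commute_mul_left_iff.1 hxy
  have hy_xy : ¬Commute (x * y) y :=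
    mt (IsRightRegular.all y).commute_mul_right_iff.1 fun h => hxy h.symm
  intro hT
  exact hT.not_adj_of_adj_of_adj (a := ⟨x, notMem_relCenter_of_not_commute hxy⟩)
    (b := ⟨y, notMem_relCenter_of_not_commute fun h => hxy h.symm⟩)
    (c := ⟨x * y, notMem_relCenter_of_not_commute hx_xy⟩)
    (gnc_one_adj_of_not_commute _ _ (Or.inl hx) hxy)
    (gnc_one_adj_of_not_commute _ _ (Or.inl hy) fun h => hy_xy h.symm)
    (gnc_one_adj_of_not_commute _ _ (Or.inl hx) fun h => hx_xy h.symm)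

lemma not_isAcyclic_gnc_one_of_forall_commute (hH : (H : Set G) ≠ relCenter G H)
    (h2 : Nat.card H ≠ 2) (hHc : ∀ x ∈ H, ∀ y ∈ H, Commute x y) :
    ¬(gnc G H 1).IsAcyclic := by
  obtain ⟨a, haH, ha⟩ := exists_mem_notMem_relCenter hH
  obtain ⟨a', ha'H, ha', ha'a⟩ := exists_ne_mem_notMem_relCenter haH ha h2
  obtain ⟨p, hp⟩ := exists_not_commute_of_notMem_relCenter haH ha
  obtain ⟨q, hq⟩ := exists_not_commute_of_notMem_relCenter ha'H ha'
  obtain ⟨b, hab, ha'b⟩ := exists_not_commute_and_not_commute hp hq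
  have ha_ab : ¬Commute a (a * b) := mt (Commute.refl a).commute_mul_right_iff.1 hab
  have ha'_ab : ¬Commute a' (a * b) := mt (hHc a' ha'H a haH).commute_mul_right_iff.1 ha'b
  have hb : b ∉ relCenter G H := notMem_relCenter_of_not_commute fun h => hab h.symm
  have hab' : a * b ∉ relCenter G H := notMem_relCenter_of_not_commute fun h => ha_ab h.symm
  intro hT
  have := hT.commonNeighbors_subsingleton (v := ⟨a, ha⟩) (w := ⟨a', ha'⟩)
    (by simpa using ha'a.symm) (x := ⟨b, hb⟩)
    ⟨gnc_one_adj_of_not_commute _ _ (Or.inl haH) hab,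
      gnc_one_adj_of_not_commute _ _ (Or.inl ha'H) ha'b⟩
    (y := ⟨a * b, hab'⟩)
    ⟨gnc_one_adj_of_not_commute _ _ (Or.inl haH) ha_ab,
      gnc_one_adj_of_not_commute _ _ (Or.inl ha'H) ha'_ab⟩
  obtain rfl : a = 1 := by simpa using congrArg Subtype.val this
  exact ha one_mem_relCenter

theorem not_isAcyclic_gnc_one (hH : (H : Set G) ≠ relCenter G H) (h2 : Nat.card H ≠ 2) :
    ¬(gnc G H 1).IsAcyclic := by
  by_cases hHc : ∀ x ∈ H, ∀ y ∈ H, Commute x y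
  · exact not_isAcyclic_gnc_one_of_forall_commute hH h2 hHc
  · push Not at hHc
    obtain ⟨x, hx, y, hy, hxy⟩ := hHc
    exact not_isAcyclic_gnc_one_of_not_commute hx hy hxy

end TrivialTarget

section NontrivialTarget

variable {G : Type*} [Group G] {H : Subgroup G} {g : G}

lemma not_isAcyclic_gnc_of_commute_triangle (hg : g ≠ 1) {a b c : G}
    (ha : a ∉ relCenter G H) (hb : b ∉ relCenter G H) (hc : c ∉ relCenter G H)
    (haH : a ∈ H) (hbH : b ∈ H) (hab : a ≠ b) (hac : a ≠ c) (hbc : b ≠ c)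
    (h_ab : Commute a b) (h_ac : Commute a c) (h_bc : Commute b c) :
    ¬(gnc G H g).IsAcyclic := fun hT =>
  hT.not_adj_of_adj_of_adj (gnc_adj_of_commute hg ha hb hab (Or.inl haH) h_ab)
    (gnc_adj_of_commute hg hb hc hbc (Or.inl hbH) h_bc)
    (gnc_adj_of_commute hg ha hc hac (Or.inl haH) h_ac)

lemma eq_mul_of_gnc_adj (hg : g ≠ 1) (hT : (gnc G H g).IsAcyclic) {a u : G}
    (haH : a ∈ H) (ha : a ∉ relCenter G H) (hu : u ∈ relCenter G H) (hu1 : u ≠ 1)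
    {w : ((relCenter G H)ᶜ : Set G)} (hw : (gnc G H g).Adj ⟨a, ha⟩ w) : (w : G) = a * u := by
  obtain ⟨w, hw'⟩ := w
  by_contra hne
  have hau := mul_notMem_relCenter haH ha hu
  obtain ⟨-, -, h₁, h₂⟩ := (gnc_adj_mk ha hw').1 hw
  have hcomm := comm'_mul_of_forall_commute (commute_of_mem_relCenter hu) a w
  refine hT.not_adj_of_adj_of_adj (b := ⟨a * u, hau⟩) ?_ ?_ hw
  · exact gnc_adj_of_commute hg ha hau (by simpa [eq_comm] using hu1) (Or.inl haH)
      ((Commute.refl a).mul_right (commute_of_mem_relCenter hu a).symm)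
  · exact (gnc_adj_mk hau hw').2
      ⟨Ne.symm hne, Or.inl (H.mul_mem haH hu.1), hcomm ▸ h₁, hcomm ▸ h₂⟩

theorem not_isTree_gnc_of_mem_relCenter (hg : g ≠ 1) (hH : (H : Set G) ≠ relCenter G H)
    {u : G} (hu : u ∈ relCenter G H) (hu1 : u ≠ 1) : ¬(gnc G H g).IsTree := by
  intro hT
  obtain ⟨a, haH, ha⟩ := exists_mem_notMem_relCenter hH
  have hau := mul_notMem_relCenter haH ha hu
  let S : Set ((relCenter G H)ᶜ : Set G) := {v | (v : G) = a ∨ (v : G) = a * u}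
  have hS : ∀ ⦃v w⦄, (gnc G H g).Adj v w → v ∈ S → w ∈ S := by
    rintro v w hvw (hv | hv)
    · obtain rfl : v = ⟨a, ha⟩ := Subtype.ext hv
      exact Or.inr (eq_mul_of_gnc_adj hg hT.isAcyclic haH ha hu hu1 hvw)
    · obtain rfl : v = ⟨a * u, hau⟩ := Subtype.ext hv
      left
      simpa using eq_mul_of_gnc_adj hg hT.isAcyclic (H.mul_mem haH hu.1) hau
        (inv_mem_relCenter hu) (inv_ne_one.2 hu1) hvw
  obtain ⟨p, hp⟩ := exists_not_commute_of_notMem_relCenter haH ha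
  have hpS : p = a ∨ p = a * u := hT.connected.preconnected.mem_of_adj_closed hS
    (u := ⟨a, ha⟩) (Or.inl rfl) ⟨p, notMem_relCenter_of_not_commute fun h => hp h.symm⟩
  rcases hpS with rfl | rfl
  · exact hp (Commute.refl p)
  · exact hp ((Commute.refl a).mul_right (commute_of_mem_relCenter hu a).symm)

lemma eq_one_or_eq_or_eq_inv_of_commute (hg : g ≠ 1) (hZ : relCenter G H = {1})
    (hT : (gnc G H g).IsAcyclic) {x y : G} (hxH : x ∈ H) (hx2 : x ^ 2 ≠ 1)
    (hxy : Commute x y) : y = 1 ∨ y = x ∨ y = x⁻¹ := by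
  by_contra! h
  obtain ⟨hy1, hyx, hyx'⟩ := h
  have hx1 : x ≠ 1 := by rintro rfl; simp at hx2
  have hxx' : x ≠ x⁻¹ := fun h => hx2 (by rw [sq]; exact eq_inv_iff_mul_eq_one.1 h)
  exact not_isAcyclic_gnc_of_commute_triangle hg ((notMem_relCenter_iff_ne_one hZ).2 hx1)
    ((notMem_relCenter_iff_ne_one hZ).2 (inv_ne_one.2 hx1))
    ((notMem_relCenter_iff_ne_one hZ).2 hy1) hxH (H.inv_mem hxH) hxx' hyx.symm hyx'.symm
    (Commute.refl x).inv_right hxy hxy.inv_left hT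

lemma sq_eq_one_or_pow_three_eq_one (hg : g ≠ 1) (hZ : relCenter G H = {1})
    (hT : (gnc G H g).IsAcyclic) {x : G} (hxH : x ∈ H) : x ^ 2 = 1 ∨ x ^ 3 = 1 := by
  by_contra! h
  obtain ⟨hx2, hx3⟩ := h
  rcases eq_one_or_eq_or_eq_inv_of_commute hg hZ hT hxH hx2 (Commute.self_pow x 2)
    with h | h | h
  · exact hx2 h
  · exact hx2 (by simp_all [sq])
  · exact hx3 (by rw [pow_succ, h, inv_mul_cancel])

lemma card_le_two_of_forall_sq_eq_one (hg : g ≠ 1) (hZ : relCenter G H = {1})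
    (hT : (gnc G H g).IsAcyclic) {K : Subgroup G} (hKH : K ≤ H) (hK : ∀ x ∈ K, x ^ 2 = 1) :
    Nat.card K ≤ 2 := by
  by_contra! hK2
  have : Finite K := Nat.finite_of_card_ne_zero (by omega)
  obtain ⟨x, y, ⟨hxK, hx1⟩, ⟨hyK, hy1⟩, hxy⟩ : ∃ x y, x ∈ (K : Set G) \ {1} ∧
      y ∈ (K : Set G) \ {1} ∧ x ≠ y := by
    rw [← Set.one_lt_ncard_iff, Set.ncard_sdiff_singleton_of_mem K.one_mem,
      ← Nat.card_coe_set_eq, SetLike.coe_sort_coe]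
    omega
  rw [Set.mem_singleton_iff] at hx1 hy1
  have hc := commute_of_sq_eq_one (hK x hxK) (hK y hyK) (hK _ (K.mul_mem hxK hyK))
  have hxy1 : x * y ≠ 1 := fun h => hxy <| by
    rw [← inv_eq_of_mul_eq_one_right h]
    exact (inv_eq_of_mul_eq_one_right (sq x ▸ hK x hxK)).symm
  exact not_isAcyclic_gnc_of_commute_triangle hg ((notMem_relCenter_iff_ne_one hZ).2 hx1)
    ((notMem_relCenter_iff_ne_one hZ).2 hy1) ((notMem_relCenter_iff_ne_one hZ).2 hxy1)
    (hKH hxK) (hKH hyK) hxy (by simpa [eq_comm] using hy1) (by simpa [eq_comm] using hx1)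
    hc ((Commute.refl x).mul_right hc) (hc.symm.mul_right (Commute.refl y)) hT

lemma card_le_fifteen [Finite G] (hg : g ≠ 1) (hZ : relCenter G H = {1})
    (hT : (gnc G H g).IsAcyclic) {a : G} (haH : a ∈ H) (ha2 : a ^ 2 ≠ 1) :
    Nat.card G ≤ 15 := by
  have ha1 : a ≠ 1 := by rintro rfl; simp at ha2
  have hC : ∀ c, Commute a c → c ∈ ({1, a, a⁻¹} : Set G) :=
    fun c hc => eq_one_or_eq_or_eq_inv_of_commute hg hZ hT haH ha2 hc
  have hC3 : ({1, a, a⁻¹} : Set G).ncard ≤ 3 := by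
    classical
    rw [show ({1, a, a⁻¹} : Set G) = (({1, a, a⁻¹} : Finset G) : Set G) by simp,
      Set.ncard_coe_finset]
    exact Finset.card_le_three
  have hfib : ∀ w, {c | comm' a c = w}.ncard ≤ 3 ∧ {c | comm' a⁻¹ c = w}.ncard ≤ 3 :=
    fun w => ⟨(ncard_setOf_comm'_eq_le (Set.toFinite _) hC).trans hC3,
      (ncard_setOf_comm'_eq_le (Set.toFinite _)
        fun c hc => hC c (Commute.inv_left_iff.1 hc)).trans hC3⟩
  -- `a` and `a⁻¹` are adjacent, so no vertex outside `{1, a, a⁻¹}` is adjacent to both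
  have hcover : ∀ c, c ∈ ({1, a, a⁻¹} : Set G) ∨ comm' a c = g ∨ comm' a c = g⁻¹ ∨
      comm' a⁻¹ c = g ∨ comm' a⁻¹ c = g⁻¹ := by
    intro c
    by_contra! h
    obtain ⟨hc, ha₁, ha₂, hb₁, hb₂⟩ := h
    simp only [Set.mem_insert_iff, Set.mem_singleton_iff, not_or] at hc
    have ha := (notMem_relCenter_iff_ne_one hZ).2 ha1
    have ha' := (notMem_relCenter_iff_ne_one hZ).2 (inv_ne_one.2 ha1)
    have hc' := (notMem_relCenter_iff_ne_one hZ).2 hc.1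
    refine hT.not_adj_of_adj_of_adj (b := ⟨a⁻¹, ha'⟩) (c := ⟨c, hc'⟩)
      (gnc_adj_of_commute hg ha ha' ?_ (Or.inl haH) (Commute.refl a).inv_right)
      ((gnc_adj_mk ha' hc').2 ⟨Ne.symm hc.2.2, Or.inl (H.inv_mem haH), hb₁, hb₂⟩)
      ((gnc_adj_mk ha hc').2 ⟨Ne.symm hc.2.1, Or.inl haH, ha₁, ha₂⟩)
    exact fun h => ha2 (by rw [sq]; exact eq_inv_iff_mul_eq_one.1 h)
  calc Nat.card G = (Set.univ : Set G).ncard := (Set.ncard_univ G).symm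
    _ ≤ (({1, a, a⁻¹} : Set G) ∪ {c | comm' a c = g} ∪ {c | comm' a c = g⁻¹} ∪
          {c | comm' a⁻¹ c = g} ∪ {c | comm' a⁻¹ c = g⁻¹}).ncard :=
        Set.ncard_le_ncard fun c _ => by simpa [or_assoc] using hcover c
    _ ≤ 3 + 3 + 3 + 3 + 3 := by
        grw [Set.ncard_union_le, Set.ncard_union_le, Set.ncard_union_le, Set.ncard_union_le,
          hC3, (hfib g).1, (hfib g⁻¹).1, (hfib g).2, (hfib g⁻¹).2]

lemma not_isAcyclic_gnc_top_of_card [Finite G] (hg : g ≠ 1) (hZ : relCenter G ⊤ = {1})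
    (hG : Nat.card G = 9 ∨ Nat.card G = 12 ∨ Nat.card G = 15) :
    ¬(gnc G ⊤ g).IsAcyclic := by
  intro hT
  have hord := fun x => sq_eq_one_or_pow_three_eq_one hg hZ hT (Subgroup.mem_top x)
  rcases hG with h9 | h12 | h15
  · have : Fact (Nat.Prime 3) := ⟨Nat.prime_three⟩
    have : Nontrivial G := Finite.one_lt_card_iff_nontrivial.1 (by omega)
    have := (IsPGroup.of_card (p := 3) (n := 2) h9).center_nontrivial
    obtain ⟨z, hz⟩ := exists_ne (1 : Subgroup.center G)
    have hzZ : (z : G) ∈ relCenter G ⊤ :=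
      ⟨Subgroup.mem_top _, fun y => (Subgroup.mem_center_iff.1 z.2 y).symm⟩
    rw [hZ] at hzZ
    exact hz (Subtype.ext hzZ)
  · have : Fact (Nat.Prime 2) := ⟨Nat.prime_two⟩
    obtain ⟨K, hK⟩ := Sylow.exists_subgroup_card_pow_prime 2 (n := 2) (by rw [h12]; norm_num)
    have hKsq : ∀ x ∈ K, x ^ 2 = 1 := fun x hx => (hord x).elim id fun h3 => by
      have h4 : orderOf x ∣ 2 ^ 2 := hK ▸ K.orderOf_dvd_natCard hx
      have : orderOf x ∣ Nat.gcd 3 (2 ^ 2) := Nat.dvd_gcd (orderOf_dvd_of_pow_eq_one h3) h4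
      simp_all
    have := card_le_two_of_forall_sq_eq_one hg hZ hT le_top hKsq
    omega
  · have : Fact (Nat.Prime 5) := ⟨by norm_num⟩
    obtain ⟨x, hx⟩ := exists_prime_orderOf_dvd_card' 5 (by rw [h15]; norm_num)
    rcases hord x with h | h <;> have := orderOf_dvd_of_pow_eq_one h <;> rw [hx] at this <;>
      norm_num at this

theorem not_isAcyclic_gnc_of_relCenter_eq_one [Finite G] (hg : g ≠ 1)
    (hZ : relCenter G H = {1}) (hH : (H : Set G) ≠ relCenter G H) (h2 : Nat.card H ≠ 2)
    (h3 : Nat.card H ≠ 3) (h6 : Nat.card H ≠ 6) : ¬(gnc G H g).IsAcyclic := by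
  intro hT
  have hH1 : Nat.card H ≠ 1 := by
    rw [Ne, Subgroup.card_eq_one]
    rintro rfl
    exact hH (Subgroup.coe_bot.trans hZ.symm)
  have := Nat.card_pos (α := H)
  by_cases hsq : ∀ x ∈ H, x ^ 2 = 1
  · have := card_le_two_of_forall_sq_eq_one hg hZ hT le_rfl hsq
    omega
  push Not at hsq
  obtain ⟨a, haH, ha2⟩ := hsq
  have ha3 : a ^ 3 = 1 := (sq_eq_one_or_pow_three_eq_one hg hZ hT haH).resolve_left ha2
  have h3H : 3 ∣ Nat.card H :=
    orderOf_eq_prime ha3 (by rintro rfl; simp at ha2) ▸ H.orderOf_dvd_natCard haH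
  have hG := card_le_fifteen hg hZ hT haH ha2
  have hGH : Nat.card G = Nat.card H :=
    Nat.eq_of_dvd_of_lt_two_mul Nat.card_pos.ne' H.card_subgroup_dvd_card (by omega)
  have hG' : Nat.card G = 9 ∨ Nat.card G = 12 ∨ Nat.card G = 15 := by omega
  obtain rfl := H.eq_top_of_card_eq hGH.symm
  exact not_isAcyclic_gnc_top_of_card hg hZ hG' hT

end NontrivialTarget

theorem stmt6_general {G : Type*} [Group G] [Fintype G]
    (H : Subgroup G) (hH : (H : Set G) ≠ relCenter G H)
    (g : G)
    (h2 : Nat.card H ≠ 2) (h3 : Nat.card H ≠ 3)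
    (h6 : Nat.card H ≠ 6) :
    ¬ (gnc G H g).IsTree := by
  intro hT
  rcases eq_or_ne g 1 with rfl | hg
  · exact not_isAcyclic_gnc_one hH h2 hT.isAcyclic
  by_cases hZ : ∃ u ∈ relCenter G H, u ≠ 1
  · obtain ⟨u, hu, hu1⟩ := hZ
    exact not_isTree_gnc_of_mem_relCenter hg hH hu hu1 hT
  · push Not at hZ
    exact not_isAcyclic_gnc_of_relCenter_eq_one hg
      (Set.eq_singleton_iff_unique_mem.2 ⟨one_mem_relCenter, hZ⟩) hH h2 h3 h6 hT.isAcyclic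

/-- if `|H| ∉ {2, 3, 4, 6}` then `Δ_{H,G}^g` is not a tree. -/
theorem stmt6 {G : Type*} [Group G] [Fintype G]
    (hna : ∃ x y : G, x * y ≠ y * x)
    (H : Subgroup G) (hH : (H : Set G) ≠ relCenter G H)
    (g : G) (hgK : g ∈ relComm G H)
    (h2 : Nat.card H ≠ 2) (h3 : Nat.card H ≠ 3)
    (h4 : Nat.card H ≠ 4) (h6 : Nat.card H ≠ 6) :
    ¬ (gnc G H g).IsTree :=
  stmt6_general H hH g h2 h3 h6
end

section
/- Let G be a finite non-abelian group, H a subgroup of G, and g ∈ K(H,G) with g ∈ H, g ∉ Z(G) (the center of G), and g² = 1. Then the graph Δ_{H,G}^g is connected and its diameter equals 2. -/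
open SimpleGraph

/-! The involution `g` is itself a vertex, and it is adjacent to every other vertex: `[g,x] = g⁻¹`
would force `x⁻¹gx = 1`, and `g⁻¹ = g`, so `[g,x] = g` is excluded as well. A dominating vertex
gives diameter at most `2`, while any witness `g = [a,b]` yields two distinct vertices `a`, `b`
that are not adjacent, so the diameter is exactly `2`. -/

namespace SimpleGraph

variable {V : Type*} {G : SimpleGraph V} {v a b : V}

lemma ediam_le_two_of_forall_adj (hv : ∀ w, v ≠ w → G.Adj v w) : G.ediam ≤ 2 :=
  calc G.ediam ≤ 2 * G.eccent v := ediam_le_two_mul_eccent v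
    _ ≤ 2 * 1 := by gcongr; exact (eccent_le_one_iff v).mpr hv
    _ = 2 := mul_one 2

lemma connected_and_diam_eq_two_of_forall_adj (hv : ∀ w, v ≠ w → G.Adj v w) (hab : a ≠ b)
    (hnadj : ¬G.Adj a b) : G.Connected ∧ G.diam = 2 := by
  have hle := ediam_le_two_of_forall_adj hv
  have : Nonempty V := ⟨v⟩
  refine ⟨connected_of_ediam_ne_top (ne_top_of_le_ne_top (by decide) hle), ?_⟩
  have hva : v ≠ a := by rintro rfl; exact hnadj (hv b hab)
  have hvb : v ≠ b := by rintro rfl; exact hnadj (hv a hab.symm).symm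
  have hdist : G.edist a b = 2 :=
    edist_eq_two_iff.mpr ⟨hab, hnadj, v, (hv a hva).symm, (hv b hvb).symm⟩
  rw [diam, le_antisymm hle (hdist ▸ edist_le_ediam)]
  rfl

end SimpleGraph

section Commutator

variable {G : Type*} [Group G] {g x y : G}

lemma comm'_eq_one_of_commute (h : Commute x y) : comm' x y = 1 := by
  rw [comm', mul_assoc, h.eq]
  group

lemma comm'_eq_inv_left_iff : comm' g x = g⁻¹ ↔ g = 1 := by
  rw [comm', mul_assoc, mul_assoc, mul_eq_left, ← mul_assoc]
  simpa using conj_eq_one_iff (a := x⁻¹) (b := g)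

end Commutator

section RelCenter

variable {G : Type*} [Group G] {H : Subgroup G} {g x y : G}

lemma relCenter_subset_center : relCenter G H ⊆ Subgroup.center G :=
  fun _ hx => Subgroup.mem_center_iff.mpr fun y => (hx.2 y).symm

lemma notMem_relCenter_left_of_comm'_ne_one (h : comm' x y ≠ 1) : x ∉ relCenter G H :=
  fun hx => h (comm'_eq_one_of_commute (hx.2 y))

lemma notMem_relCenter_right_of_comm'_ne_one (h : comm' x y ≠ 1) : y ∉ relCenter G H :=
  fun hy => h (comm'_eq_one_of_commute (hy.2 x).symm)

lemma gnc_adj_of_inv_eq_self (hgH : g ∈ H) (hg1 : g ≠ 1) (hginv : g⁻¹ = g)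
    (hg : g ∈ (relCenter G H)ᶜ) {w : ((relCenter G H)ᶜ : Set G)} (hw : ⟨g, hg⟩ ≠ w) :
    (gnc G H g).Adj ⟨g, hg⟩ w :=
  ⟨hw, .inl hgH, fun h => hg1 (comm'_eq_inv_left_iff.mp (h.trans hginv.symm)),
    fun h => hg1 (comm'_eq_inv_left_iff.mp h)⟩

end RelCenter

theorem stmt9_general {G : Type*} [Group G]
    (H : Subgroup G) (g : G) (hgK : g ∈ relComm G H)
    (hgH : g ∈ H) (hgZ : g ∉ Subgroup.center G) (hg2 : g ^ 2 = 1) :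
    (gnc G H g).Connected ∧ (gnc G H g).diam = 2 := by
  have hg1 : g ≠ 1 := fun h => hgZ (h ▸ Subgroup.one_mem _)
  have hginv : g⁻¹ = g := inv_eq_of_mul_eq_one_left (pow_two g ▸ hg2)
  obtain ⟨a, -, b, hab⟩ := hgK
  have hab_ne_one : comm' a b ≠ 1 := hab ▸ hg1
  let gV : ((relCenter G H)ᶜ : Set G) := ⟨g, fun h => hgZ (relCenter_subset_center h)⟩
  let aV : ((relCenter G H)ᶜ : Set G) := ⟨a, notMem_relCenter_left_of_comm'_ne_one hab_ne_one⟩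
  let bV : ((relCenter G H)ᶜ : Set G) := ⟨b, notMem_relCenter_right_of_comm'_ne_one hab_ne_one⟩
  have haV_ne_bV : aV ≠ bV := fun h => by
    obtain rfl : a = b := congrArg Subtype.val h
    exact hab_ne_one (comm'_eq_one_of_commute (Commute.refl a))
  exact connected_and_diam_eq_two_of_forall_adj (v := gV)
    (fun _ => gnc_adj_of_inv_eq_self hgH hg1 hginv _) haV_ne_bV (fun h => h.2.2.1 hab)

/-- if `g ∈ K(H,G)`, `g ∈ H`, `g` is non-central in `G` and `g² = 1`,
then `Δ_{H,G}^g` is connected with diameter `2`. -/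
theorem stmt9 {G : Type*} [Group G] [Fintype G]
    (hna : ∃ x y : G, x * y ≠ y * x)
    (H : Subgroup G) (g : G) (hgK : g ∈ relComm G H)
    (hgH : g ∈ H) (hgZ : g ∉ Subgroup.center G) (hg2 : g ^ 2 = 1) :
    (gnc G H g).Connected ∧ (gnc G H g).diam = 2 :=
  stmt9_general H g hgK hgH hgZ hg2
end

section
/- Let n ≥ 8 be even, G = D_{2n} the dihedral group of order 2n, H = ⟨a⟩ the cyclic subgroup of rotations, and g ∈ ⟨a²⟩ (i.e., g = a^{2i} for some i). Then the graph Δ_{H,G}^g is connected and its diameter equals 2. -/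
/-! Every commutator in `D_{2n}` is a rotation: `[r i, r j] = 1` and `[r i, sr j] = r (-2i)`.
Reflections lie outside `H`, so two of them are never adjacent and the diameter is at least 2.
A rotation `r m` with `r (-2m) ∉ {1, g, g⁻¹}` is adjacent to every reflection; since doubling on
`ZMod n` is at most two-to-one, at most six values of `m` are excluded, so for `n ≥ 8` such an
`m` exists avoiding any prescribed value, and it is a common neighbour of any two non-adjacent
vertices (for `g = 1` a reflection serves as common neighbour of two rotations instead). -/

open SimpleGraph

open DihedralGroup Finset

theorem SimpleGraph.ediam_eq_two_of_commonNeighbors_nonempty {V : Type*} {G : SimpleGraph V}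
    {u v : V} (huv : u ≠ v) (hnadj : ¬G.Adj u v)
    (h : ∀ x y, x ≠ y → ¬G.Adj x y → (G.commonNeighbors x y).Nonempty) :
    G.ediam = 2 := by
  refine le_antisymm (ediam_le_of_edist_le fun x y => ?_)
    ((edist_eq_two_iff.2 ⟨huv, hnadj, h u v huv hnadj⟩).symm.le.trans edist_le_ediam)
  by_cases hxy : G.Adj x y ∨ x = y
  · exact (edist_le_one_iff_adj_or_eq.2 hxy).trans one_le_two
  · rw [not_or] at hxy
    exact (edist_eq_two_iff.2 ⟨hxy.2, hxy.1, h x y hxy.2 hxy.1⟩).le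

theorem IsAddCyclic.card_filter_nsmul_eq_le {α : Type*} [AddCommGroup α] [Fintype α]
    [DecidableEq α] [IsAddCyclic α] {k : ℕ} (hk : 0 < k) (d : α) :
    #{a | k • a = d} ≤ k := by
  rcases (filter (fun a => k • a = d) univ).eq_empty_or_nonempty with h | ⟨a₀, ha₀⟩
  · simp [h]
  · rw [mem_filter] at ha₀
    calc #{a | k • a = d}
        ≤ #{a | k • a = 0} := card_le_card_of_injOn (· - a₀)
          (fun a ha => by simp_all [nsmul_sub]) (fun _ _ _ _ h => sub_left_injective h)
      _ ≤ k := IsAddCyclic.card_nsmul_eq_zero_le hk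

theorem IsAddCyclic.card_filter_nsmul_mem_le {α : Type*} [AddCommGroup α] [Fintype α]
    [DecidableEq α] [IsAddCyclic α] {k : ℕ} (hk : 0 < k) (T : Finset α) :
    #{a | k • a ∈ T} ≤ k * #T :=
  calc #{a | k • a ∈ T}
      ≤ #(T.biUnion fun d => {a | k • a = d}) := card_le_card fun a => by simp
    _ ≤ ∑ d ∈ T, #{a | k • a = d} := card_biUnion_le
    _ ≤ ∑ _d ∈ T, k := sum_le_sum fun d _ => card_filter_nsmul_eq_le hk d
    _ = k * #T := by rw [sum_const, smul_eq_mul, mul_comm]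

namespace DihedralGroup

variable {n : ℕ}

abbrev rotations (n : ℕ) : Subgroup (DihedralGroup n) :=
  Subgroup.zpowers (r 1)

local notation "𝒵" => relCenter (DihedralGroup n) (rotations n)

theorem r_mem_rotations (i : ZMod n) : r i ∈ rotations n :=
  ⟨(i.cast : ℤ), by simp only [r_one_zpow, ZMod.intCast_zmod_cast]⟩

theorem sr_notMem_rotations (j : ZMod n) : sr j ∉ rotations n := by
  rintro ⟨k, hk⟩
  simp at hk

theorem comm'_r_r (i j : ZMod n) : comm' (r i) (r j) = 1 := by
  simp only [comm', inv_r, r_mul_r, ← r_zero]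
  ring_nf

theorem comm'_r_sr (i j : ZMod n) : comm' (r i) (sr j) = r (-(2 * i)) := by
  simp only [comm', inv_r, inv_sr, r_mul_sr, sr_mul_r, sr_mul_sr]
  ring_nf

theorem r_mem_relCenter_iff (i : ZMod n) : r i ∈ 𝒵 ↔ 2 * i = 0 := by
  simp only [relCenter, Set.mem_ofPred_eq, r_mem_rotations, true_and]
  rw [two_mul, ← neg_eq_iff_add_eq_zero]
  constructor
  · intro h
    simpa using h (sr 0)
  · rintro h (j | j)
    · simp only [r_mul_r, add_comm]
    · simp only [r_mul_sr, sr_mul_r, sub_eq_add_neg, h]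

theorem sr_notMem_relCenter (j : ZMod n) : sr j ∉ 𝒵 :=
  fun h => sr_notMem_rotations j h.1

variable (g : DihedralGroup n)

local notation "Δ" => gnc (DihedralGroup n) (rotations n) g

theorem gnc_adj_r_sr {i j : ZMod n} (hi : r i ∈ 𝒵ᶜ) (hj : sr j ∈ 𝒵ᶜ) :
    (Δ).Adj ⟨r i, hi⟩ ⟨sr j, hj⟩ ↔ r (-(2 * i)) ≠ g ∧ r (-(2 * i)) ≠ g⁻¹ := by
  simp [gnc, comm'_r_sr, r_mem_rotations]

theorem gnc_adj_r_r {i j : ZMod n} (hij : i ≠ j) (hi : r i ∈ 𝒵ᶜ) (hj : r j ∈ 𝒵ᶜ) :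
    (Δ).Adj ⟨r i, hi⟩ ⟨r j, hj⟩ ↔ g ≠ 1 := by
  simp [gnc, comm'_r_r, r_mem_rotations, hij, eq_comm (a := (1 : DihedralGroup n))]

theorem not_gnc_adj_sr_sr {i j : ZMod n} (hi : sr i ∈ 𝒵ᶜ) (hj : sr j ∈ 𝒵ᶜ) :
    ¬(Δ).Adj ⟨sr i, hi⟩ ⟨sr j, hj⟩ :=
  fun h => h.2.1.elim (sr_notMem_rotations i) (sr_notMem_rotations j)

theorem gnc_one_adj_r_sr {i j : ZMod n} (hi : r i ∈ 𝒵ᶜ) (hj : sr j ∈ 𝒵ᶜ) :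
    (gnc (DihedralGroup n) (rotations n) 1).Adj ⟨r i, hi⟩ ⟨sr j, hj⟩ := by
  rw [gnc_adj_r_sr, inv_one, and_self, ne_eq, ← r_zero, r.injEq, neg_eq_zero]
  exact mt (r_mem_relCenter_iff i).2 hi

theorem exists_r_adj_forall_sr (hn : 8 ≤ n) (i : ZMod n) :
    ∃ m, ∃ hm : r m ∈ 𝒵ᶜ, m ≠ i ∧
      ∀ j (hj : sr j ∈ 𝒵ᶜ), (Δ).Adj ⟨r m, hm⟩ ⟨sr j, hj⟩ := by
  have : NeZero n := ⟨by omega⟩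
  set T : Finset (ZMod n) := {d | r (-d) ∈ ({1, g, g⁻¹} : Finset (DihedralGroup n))}
  have hT : #T ≤ 3 :=
    (card_le_card_of_injOn (fun d => r (-d)) (fun d hd => (mem_filter.1 hd).2)
      (fun _ _ _ _ h => neg_injective (r.inj h))).trans card_le_three
  set B : Finset (ZMod n) := insert i (filter (fun m => 2 • m ∈ T) univ)
  have hB : #B < #(univ : Finset (ZMod n)) := by
    have := IsAddCyclic.card_filter_nsmul_mem_le two_pos T
    calc #B ≤ #{m | 2 • m ∈ T} + 1 := card_insert_le _ _
      _ < n := by omega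
      _ = #univ := by rw [card_univ, ZMod.card]
  obtain ⟨m, -, hm⟩ := exists_mem_notMem_of_card_lt_card hB
  simp only [B, T, mem_insert, mem_singleton, nsmul_eq_mul, Nat.cast_ofNat, mem_filter, mem_univ,
    true_and, not_or] at hm
  obtain ⟨hmi, hm1, hmg, hmg'⟩ := hm
  have hm : r m ∈ 𝒵ᶜ := fun h =>
    hm1 (by rw [(r_mem_relCenter_iff m).1 h, neg_zero, r_zero])
  exact ⟨m, hm, hmi, fun j hj => (gnc_adj_r_sr g hm hj).2 ⟨hmg, hmg'⟩⟩

theorem gnc_commonNeighbors_r_sr_nonempty (hn : 8 ≤ n) {i j : ZMod n} (hi : r i ∈ 𝒵ᶜ)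
    (hj : sr j ∈ 𝒵ᶜ) (hnadj : ¬(Δ).Adj ⟨r i, hi⟩ ⟨sr j, hj⟩) :
    ((Δ).commonNeighbors ⟨r i, hi⟩ ⟨sr j, hj⟩).Nonempty := by
  have hg : g ≠ 1 := by
    rintro rfl
    exact hnadj (gnc_one_adj_r_sr hi hj)
  obtain ⟨m, hm, hmi, hadj⟩ := exists_r_adj_forall_sr g hn i
  exact ⟨⟨r m, hm⟩,
    (mem_commonNeighbors _).2 ⟨(gnc_adj_r_r g hmi.symm hi hm).2 hg, (hadj j hj).symm⟩⟩

theorem gnc_commonNeighbors_nonempty (hn : 8 ≤ n) (x y : (𝒵ᶜ : Set (DihedralGroup n)))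
    (hxy : x ≠ y) (hnadj : ¬(Δ).Adj x y) :
    ((Δ).commonNeighbors x y).Nonempty := by
  obtain ⟨i | i, hi⟩ := x <;> obtain ⟨j | j, hj⟩ := y
  · have hij : i ≠ j := by
      rintro rfl
      exact hxy rfl
    obtain rfl : g = 1 := not_not.1 (mt (gnc_adj_r_r g hij hi hj).2 hnadj)
    exact ⟨⟨sr 0, sr_notMem_relCenter 0⟩,
      (mem_commonNeighbors _).2 ⟨gnc_one_adj_r_sr hi _, gnc_one_adj_r_sr hj _⟩⟩
  · exact gnc_commonNeighbors_r_sr_nonempty g hn hi hj hnadj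
  · rw [commonNeighbors_symm]
    exact gnc_commonNeighbors_r_sr_nonempty g hn hj hi (fun h => hnadj h.symm)
  · obtain ⟨m, hm, -, hadj⟩ := exists_r_adj_forall_sr g hn 0
    exact ⟨⟨r m, hm⟩, (mem_commonNeighbors _).2 ⟨(hadj i hi).symm, (hadj j hj).symm⟩⟩

end DihedralGroup

theorem stmt12_general (n : ℕ) (hn : 8 ≤ n)
    (g : DihedralGroup n) :
    (gnc (DihedralGroup n) (Subgroup.zpowers (DihedralGroup.r 1 : DihedralGroup n)) g).Connected ∧
    (gnc (DihedralGroup n) (Subgroup.zpowers (DihedralGroup.r 1 : DihedralGroup n)) g).diam = 2 := by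
  have : Nontrivial (ZMod n) := ZMod.nontrivial_iff.2 (by omega)
  have hdiam : (gnc (DihedralGroup n) (rotations n) g).ediam = 2 :=
    SimpleGraph.ediam_eq_two_of_commonNeighbors_nonempty
      (u := ⟨sr 0, sr_notMem_relCenter 0⟩) (v := ⟨sr 1, sr_notMem_relCenter 1⟩)
      (by simp) (not_gnc_adj_sr_sr g _ _) (gnc_commonNeighbors_nonempty g hn)
  have : Nonempty ((relCenter (DihedralGroup n) (rotations n))ᶜ : Set (DihedralGroup n)) :=
    ⟨⟨sr 0, sr_notMem_relCenter 0⟩⟩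
  refine ⟨connected_of_ediam_ne_top (by simp [hdiam]), ?_⟩
  rw [diam, hdiam]
  rfl

/-- for even `n ≥ 8`, `G = D_{2n}`, `H = ⟨a⟩` and `g ∈ ⟨a²⟩`,
the graph `Δ_{H,G}^g` is connected with diameter `2`. -/
theorem stmt12 (n : ℕ) (hn : 8 ≤ n) (hne : Even n)
    (g : DihedralGroup n)
    (hg : g ∈ Subgroup.zpowers ((DihedralGroup.r 1 : DihedralGroup n) ^ 2)) :
    (gnc (DihedralGroup n) (Subgroup.zpowers (DihedralGroup.r 1 : DihedralGroup n)) g).Connected ∧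
    (gnc (DihedralGroup n) (Subgroup.zpowers (DihedralGroup.r 1 : DihedralGroup n)) g).diam = 2 :=
  stmt12_general n hn g
end
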